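/- arXiv:1511.07326 — 2 statements merged into one kernel-verified Lean document; each statement's English description precedes it below -/
import Mathlib

section
/- For any n ∈ ℕ and any choice of signs ε_R ∈ {-1,+1} indexed by dyadic rectangles R ⊆ [0,1)² of area 2^{-n}, the supremum over [0,1)² of |Σ_{|R|=2^{-n}} ε_R h_R(x)| is exactly n+1. -/
open Finset

/-- The L^∞-normalized Haar function of the dyadic interval `[m/2^k, (m+1)/2^k)`:
`-1` on the left half, `+1` on the right half, `0` outside. -/
noncomputable def haar (k m : ℕ) (x : ℝ) : ℝ :=
  if (m : ℝ) / 2 ^ k ≤ x ∧ x < ((m : ℝ) + 1) / 2 ^ k then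
    (if x < (2 * (m : ℝ) + 1) / 2 ^ (k + 1) then -1 else 1)
  else 0

/-- The Haar function of the dyadic rectangle `[m₁/2^k₁,(m₁+1)/2^k₁) × [m₂/2^k₂,(m₂+1)/2^k₂)`. -/
noncomputable def haar2 (k₁ m₁ k₂ m₂ : ℕ) (p : ℝ × ℝ) : ℝ :=
  haar k₁ m₁ p.1 * haar k₂ m₂ p.2

/-- The hyperbolic Haar sum `∑_{|R| = 2^{-n}} α_R h_R` over dyadic rectangles of area `2^{-n}`. -/
noncomputable def sbSum (n : ℕ) (α : ℕ → ℕ → ℕ → ℝ) (p : ℝ × ℝ) : ℝ :=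
  ∑ k ∈ Finset.range (n + 1), ∑ m₁ ∈ Finset.range (2 ^ k),
    ∑ m₂ ∈ Finset.range (2 ^ (n - k)), α k m₁ m₂ * haar2 k m₁ (n - k) m₂ p

/-- The unit square `[0,1)²`. -/
def unitSq : Set (ℝ × ℝ) := Set.Ico (0 : ℝ) 1 ×ˢ Set.Ico (0 : ℝ) 1

/-!
At a fixed point, for each of the `n + 1` shapes of rectangles of area `2^{-n}` at most one
rectangle of that shape contains it, so each shape contributes at most `1` in absolute value.
Conversely, on the line `x₂ = 0` the only active rectangles are those whose second side starts
at `0`, and there the second Haar factor is `-1`. Choosing `x₁` by descending through nested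
dyadic intervals `I₀ ⊃ I₁ ⊃ ⋯ ⊃ Iₙ₊₁`, always into the half of `I_k` on which
`h_{I_k} = -ε_{I_k × [0, 2^{k-n})}`, makes every shape contribute exactly `+1`.
-/

theorem abs_haar_le_one (k m : ℕ) (x : ℝ) : |haar k m x| ≤ 1 := by
  unfold haar; split_ifs <;> simp

theorem eq_of_haar_ne_zero {k m m' : ℕ} {x : ℝ} (h : haar k m x ≠ 0)
    (h' : haar k m' x ≠ 0) : m = m' := by
  have hk : (0 : ℝ) < 2 ^ k := by positivity
  have mem : ∀ {j : ℕ}, haar k j x ≠ 0 → (j : ℝ) ≤ x * 2 ^ k ∧ x * 2 ^ k < j + 1 := by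
    intro j hj
    by_cases hx : (j : ℝ) / 2 ^ k ≤ x ∧ x < ((j : ℝ) + 1) / 2 ^ k
    · exact ⟨(div_le_iff₀ hk).1 hx.1, (lt_div_iff₀ hk).1 hx.2⟩
    · simp [haar, hx] at hj
  obtain ⟨h₁, h₂⟩ := mem h
  obtain ⟨h₁', h₂'⟩ := mem h'
  have : m < m' + 1 := by exact_mod_cast h₁.trans_lt h₂'
  have : m' < m + 1 := by exact_mod_cast h₁'.trans_lt h₂
  omega

theorem abs_sum_mul_haar_le_one {s : Finset ℕ} {c : ℕ → ℝ} (hc : ∀ m ∈ s, |c m| ≤ 1)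
    (k : ℕ) (x : ℝ) : |∑ m ∈ s, c m * haar k m x| ≤ 1 := by
  by_cases h : ∃ m₀ ∈ s, haar k m₀ x ≠ 0
  · obtain ⟨m₀, hm₀, hne⟩ := h
    rw [Finset.sum_eq_single_of_mem m₀ hm₀ fun m _ hm => by
      rw [not_not.1 fun h' => hm (eq_of_haar_ne_zero h' hne), mul_zero]]
    rw [abs_mul]
    exact mul_le_one₀ (hc m₀ hm₀) (abs_nonneg _) (abs_haar_le_one k m₀ x)
  · push Not at h
    rw [Finset.sum_eq_zero fun m hm => by rw [h m hm, mul_zero], abs_zero]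
    exact zero_le_one

theorem abs_sbSum_le {α : ℕ → ℕ → ℕ → ℝ} (hα : ∀ k m₁ m₂, |α k m₁ m₂| ≤ 1) (n : ℕ)
    (p : ℝ × ℝ) : |sbSum n α p| ≤ n + 1 := by
  have level_le : ∀ k, |∑ m₁ ∈ range (2 ^ k), ∑ m₂ ∈ range (2 ^ (n - k)),
      α k m₁ m₂ * haar2 k m₁ (n - k) m₂ p| ≤ 1 := fun k => by
    simp only [haar2, ← mul_assoc, mul_right_comm _ (haar k _ p.1), ← Finset.sum_mul]
    exact abs_sum_mul_haar_le_one
      (fun m₁ _ => abs_sum_mul_haar_le_one (fun m₂ _ => hα k m₁ m₂) _ _) _ _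
  calc |sbSum n α p| ≤ ∑ k ∈ range (n + 1), (1 : ℝ) :=
        (Finset.abs_sum_le_sum_abs _ _).trans (Finset.sum_le_sum fun k _ => level_le k)
    _ = n + 1 := by simp

theorem haar_apply_of_nonneg (k m : ℕ) {x : ℝ} (hx : 0 ≤ x) :
    haar k m x = if ⌊x * 2 ^ (k + 1)⌋₊ = 2 * m then -1
      else if ⌊x * 2 ^ (k + 1)⌋₊ = 2 * m + 1 then 1 else 0 := by
  have hk : (0 : ℝ) < 2 ^ (k + 1) := by positivity
  have hy : 0 ≤ x * 2 ^ (k + 1) := by positivity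
  have le_iff : ∀ j : ℕ, (j : ℝ) / 2 ^ (k + 1) ≤ x ↔ j ≤ ⌊x * 2 ^ (k + 1)⌋₊ := fun j => by
    rw [div_le_iff₀ hk, Nat.le_floor_iff hy]
  have lt_iff : ∀ j : ℕ, x < (j : ℝ) / 2 ^ (k + 1) ↔ ⌊x * 2 ^ (k + 1)⌋₊ < j := fun j => by
    rw [lt_div_iff₀ hk, Nat.floor_lt hy]
  have hlo : (m : ℝ) / 2 ^ k = ((2 * m : ℕ) : ℝ) / 2 ^ (k + 1) := by
    push_cast; rw [pow_succ]; field_simp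
  have hhi : ((m : ℝ) + 1) / 2 ^ k = ((2 * m + 2 : ℕ) : ℝ) / 2 ^ (k + 1) := by
    push_cast; rw [pow_succ]; field_simp
  have hmid : (2 * (m : ℝ) + 1) / 2 ^ (k + 1) = ((2 * m + 1 : ℕ) : ℝ) / 2 ^ (k + 1) := by
    push_cast; rfl
  unfold haar
  rw [hlo, hhi, hmid]
  simp only [le_iff, lt_iff]
  split_ifs <;> first | rfl | omega

theorem haar_apply_zero (k m : ℕ) : haar k m 0 = if m = 0 then -1 else 0 := by
  rw [haar_apply_of_nonneg k m le_rfl]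
  simp only [zero_mul, Nat.floor_zero]
  split_ifs <;> first | rfl | contradiction | omega

theorem haar_natCast_div_two_pow {k n : ℕ} (hk : k ≤ n) (m M : ℕ) :
    haar k m (M / 2 ^ (n + 1)) = if M / 2 ^ (n - k) = 2 * m then -1
      else if M / 2 ^ (n - k) = 2 * m + 1 then 1 else 0 := by
  have hscale : (M : ℝ) / 2 ^ (n + 1) * 2 ^ (k + 1) = (M : ℝ) / (2 ^ (n - k) : ℕ) := by
    rw [Nat.cast_pow, Nat.cast_ofNat, show n + 1 = n - k + (k + 1) by omega, pow_add]
    field_simp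
  rw [haar_apply_of_nonneg k m (by positivity), hscale, Nat.floor_div_eq_div]

/-- `dyadicPath b k` indexes a chain of nested dyadic intervals of length `2^{-k}`: from level `k`
one descends into the right half of the current interval exactly when `b k` holds for it. -/
def dyadicPath (b : ℕ → ℕ → Bool) : ℕ → ℕ
  | 0 => 0
  | k + 1 => 2 * dyadicPath b k + (b k (dyadicPath b k)).toNat

theorem dyadicPath_add_div_two_pow (b : ℕ → ℕ → Bool) (k j : ℕ) :
    dyadicPath b (k + j) / 2 ^ j = dyadicPath b k := by
  induction j with
  | zero => simp
  | succ j ih =>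
    have hdiv : dyadicPath b (k + j + 1) / 2 = dyadicPath b (k + j) := by
      have := Bool.toNat_le (b (k + j) (dyadicPath b (k + j)))
      simp only [dyadicPath]
      omega
    rw [← add_assoc, pow_succ', ← Nat.div_div_eq_div_mul, hdiv, ih]

theorem dyadicPath_lt (b : ℕ → ℕ → Bool) (k : ℕ) : dyadicPath b k < 2 ^ k := by
  simpa [dyadicPath, Nat.div_eq_zero_iff] using dyadicPath_add_div_two_pow b 0 k

theorem haar_dyadicPath (b : ℕ → ℕ → Bool) {k n : ℕ} (hk : k ≤ n) (m : ℕ) :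
    haar k m (dyadicPath b (n + 1) / 2 ^ (n + 1)) =
      if m = dyadicPath b k then (if b k m then 1 else -1) else 0 := by
  have hdiv : dyadicPath b (n + 1) / 2 ^ (n - k) = dyadicPath b (k + 1) := by
    rw [← dyadicPath_add_div_two_pow b (k + 1) (n - k), show k + 1 + (n - k) = n + 1 by omega]
  rw [haar_natCast_div_two_pow hk, hdiv, dyadicPath]
  by_cases hm : m = dyadicPath b k
  · subst hm
    cases b k (dyadicPath b k) <;> simp
  · have := Bool.toNat_le (b k (dyadicPath b k))
    rw [if_neg (by omega), if_neg (by omega), if_neg hm]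

theorem sbSum_dyadicPath {ε : ℕ → ℕ → ℕ → ℝ} (hε : ∀ k m₁ m₂, ε k m₁ m₂ = 1 ∨ ε k m₁ m₂ = -1)
    (n : ℕ) :
    sbSum n ε (dyadicPath (fun k m => ε k m 0 = -1) (n + 1) / 2 ^ (n + 1), 0) = n + 1 := by
  let b : ℕ → ℕ → Bool := fun k m => ε k m 0 = -1
  have level_eq_one : ∀ k ∈ range (n + 1), ∑ m₁ ∈ range (2 ^ k), ∑ m₂ ∈ range (2 ^ (n - k)),
      ε k m₁ m₂ * haar2 k m₁ (n - k) m₂ (dyadicPath b (n + 1) / 2 ^ (n + 1), 0) = 1 := by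
    intro k hk
    simp only [haar2, haar_dyadicPath b (Nat.lt_succ_iff.1 (mem_range.1 hk)), haar_apply_zero,
      mul_ite, ite_mul, mul_zero, zero_mul, Finset.sum_ite_eq', mem_range,
      Nat.two_pow_pos, if_true, dyadicPath_lt b k]
    rcases hε k (dyadicPath b k) 0 with h | h <;> norm_num [b, h]
  rw [sbSum, Finset.sum_congr rfl level_eq_one]
  simp

theorem dyadicPath_div_two_pow_mem_unitSq (b : ℕ → ℕ → Bool) (N : ℕ) :
    ((dyadicPath b N : ℝ) / 2 ^ N, (0 : ℝ)) ∈ unitSq := by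
  refine ⟨⟨by positivity, ?_⟩, ⟨le_rfl, one_pos⟩⟩
  rw [div_lt_one (by positivity)]
  exact_mod_cast dyadicPath_lt b N

/-- The supremum over `[0,1)²` of the absolute value of the signed small ball sum is exactly `n+1`. -/
theorem signed_small_ball_sup_eq (n : ℕ) (ε : ℕ → ℕ → ℕ → ℝ)
    (hε : ∀ k m₁ m₂, ε k m₁ m₂ = 1 ∨ ε k m₁ m₂ = -1) :
    sSup ((fun p => |sbSum n ε p|) '' unitSq) = n + 1 := by
  have hsign : ∀ k m₁ m₂, |ε k m₁ m₂| ≤ 1 := fun k m₁ m₂ => by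
    rcases hε k m₁ m₂ with h | h <;> simp [h]
  have hmem := dyadicPath_div_two_pow_mem_unitSq (fun k m => ε k m 0 = -1) (n + 1)
  refine IsGreatest.csSup_eq ⟨⟨_, hmem, ?_⟩, ?_⟩
  · dsimp only
    rw [sbSum_dyadicPath hε, abs_of_nonneg (by positivity)]
  · rintro _ ⟨p, -, rfl⟩
    exact abs_sbSum_le hsign n p
end

section
/- Let ε_R = ±1 for all dyadic rectangles R ⊆ [0,1)² of area 2^{-n}. Then the set of points where Σ_{|R|=2^{-n}} ε_R h_R attains the value n+1 is a union of exactly 2^{n+1} dyadic squares of side length 2^{-(n+1)}, and every dyadic rectangle of area 2^{-(n+1)} contains exactly one of these squares. -/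
/-!
On the dyadic square with lower-left corner `(q₁, q₂) / 2^(n+1)` exactly one rectangle of each shape
`2^(-k) × 2^(-(n-k))` is active, namely the one given by the leading binary digits of `q₁` and `q₂`,
and its Haar function there is the sign of digit `n-k` of `q₁` times the sign of digit `k` of `q₂`.
So the sum is a sum of `n+1` signs and equals `n+1` iff every term is `+1`. The `k`-th condition
prescribes digit `k` of `q₂` in terms of the higher digits of `q₂` and the digits of `q₁` from
`n-k` up, and symmetrically digit `n-k` of `q₁` in terms of its higher digits and those of `q₂`.
A rectangle of shape `2^(-j) × 2^(-(n+1-j))` fixes the top `j` digits of `q₁` and the top `n+1-j`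
digits of `q₂`; the conditions with `k < j` then determine the remaining digits of `q₂` from the
top down, those with `k ≥ j` the remaining digits of `q₁`, so exactly one extremal square lies in
it. The case `j = n+1` counts the `2^(n+1)` extremal squares.
-/

open Finset

/-- The dyadic rectangle `[m₁/2^k₁,(m₁+1)/2^k₁) × [m₂/2^k₂,(m₂+1)/2^k₂)` as a subset of the plane. -/
def dyadicRect (k₁ m₁ k₂ m₂ : ℕ) : Set (ℝ × ℝ) :=
  Set.Ico ((m₁ : ℝ) / 2 ^ k₁) (((m₁ : ℝ) + 1) / 2 ^ k₁) ×ˢ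
    Set.Ico ((m₂ : ℝ) / 2 ^ k₂) (((m₂ : ℝ) + 1) / 2 ^ k₂)

lemma mul_eq_one_or_eq_neg_one {x y : ℝ} (hx : x = 1 ∨ x = -1) (hy : y = 1 ∨ y = -1) :
    x * y = 1 ∨ x * y = -1 := by
  rcases hx with rfl | rfl <;> rcases hy with rfl | rfl <;> norm_num

theorem Nat.existsUnique_div_two_pow_eq_and_testBit (j b : ℕ) (f : ℕ → ℕ → Bool) :
    ∃! q : ℕ, q / 2 ^ j = b ∧ ∀ i < j, q.testBit i = f i (q / 2 ^ (i + 1)) := by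
  induction j generalizing b with
  | zero => simp
  | succ j ih =>
    refine (existsUnique_congr fun q => ?_).1 (ih (Nat.bit (f j b) b))
    have hsplit : q / 2 ^ j = Nat.bit (f j b) b ↔ q / 2 ^ (j + 1) = b ∧ q.testBit j = f j b := by
      rw [pow_succ, ← Nat.div_div_eq_div_mul, ← Nat.zero_add j, ← Nat.testBit_div_two_pow,
        Nat.zero_add]
      constructor
      · intro h
        rw [h, Nat.bit_div_two, Nat.testBit_bit_zero]
        exact ⟨rfl, rfl⟩
      · rintro ⟨h₁, h₂⟩
        rw [← Nat.bit_testBit_zero_shiftRight_one (q / 2 ^ j), Nat.shiftRight_one, h₁, h₂]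
    rw [hsplit, Nat.forall_lt_succ_right]
    constructor
    · rintro ⟨⟨hb, hj⟩, hlow⟩
      exact ⟨hb, hlow, hb ▸ hj⟩
    · rintro ⟨hb, hlow, hj⟩
      exact ⟨⟨hb, hb ▸ hj⟩, hlow⟩

lemma div_two_pow_eq_div_div {q j m : ℕ} (h : j ≤ m) : q / 2 ^ m = q / 2 ^ j / 2 ^ (m - j) := by
  rw [Nat.div_div_eq_div_mul, ← pow_add, Nat.add_sub_cancel' h]

lemma div_two_pow_sub_lt {q N k : ℕ} (hq : q < 2 ^ N) (hkN : k ≤ N) : q / 2 ^ (N - k) < 2 ^ k := by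
  rw [Nat.div_lt_iff_lt_mul (by positivity), ← pow_add, Nat.add_sub_cancel' hkN]
  exact hq

lemma lt_two_pow_of_div_two_pow_eq {q m a j : ℕ} (h : q / 2 ^ m = a) (ha : a < 2 ^ j) :
    q < 2 ^ (j + m) := by
  rw [pow_add, ← Nat.div_lt_iff_lt_mul (by positivity), h]
  exact ha

noncomputable def bitSign (q i : ℕ) : ℝ := if q.testBit i then 1 else -1

lemma bitSign_div_two_pow (q m i : ℕ) : bitSign (q / 2 ^ m) i = bitSign q (i + m) := by
  simp only [bitSign, Nat.testBit_div_two_pow]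

lemma bitSign_eq_one_or_eq_neg_one (q i : ℕ) : bitSign q i = 1 ∨ bitSign q i = -1 := by
  unfold bitSign; split <;> simp

lemma mul_bitSign_eq_one_iff {x : ℝ} (hx : x = 1 ∨ x = -1) (q i : ℕ) :
    x * bitSign q i = 1 ↔ q.testBit i = decide (x = 1) := by
  unfold bitSign
  rcases hx with rfl | rfl <;> cases q.testBit i <;> norm_num

lemma bitSign_eq_of_div {q j a : ℕ} (ha : q / 2 ^ j = a) {i : ℕ} (h : j ≤ i) :
    bitSign q i = bitSign a (i - j) := by
  rw [← ha, bitSign_div_two_pow, Nat.sub_add_cancel h]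

lemma mem_Ico_div_two_pow_iff {x : ℝ} {k m : ℕ} :
    x ∈ Set.Ico ((m : ℝ) / 2 ^ k) (((m : ℝ) + 1) / 2 ^ k) ↔ 0 ≤ x ∧ ⌊x * 2 ^ k⌋₊ = m := by
  have h2k : (0 : ℝ) < 2 ^ k := by positivity
  rw [Set.mem_Ico, div_le_iff₀ h2k, lt_div_iff₀ h2k]
  constructor
  · rintro ⟨hm, hm'⟩
    have hx : 0 ≤ x := nonneg_of_mul_nonneg_left (le_trans (Nat.cast_nonneg m) hm) h2k
    exact ⟨hx, (Nat.floor_eq_iff (by positivity)).2 ⟨hm, hm'⟩⟩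
  · rintro ⟨hx, hm⟩
    exact (Nat.floor_eq_iff (by positivity)).1 hm

lemma mem_Ico_zero_one_iff {x : ℝ} (N : ℕ) :
    x ∈ Set.Ico (0 : ℝ) 1 ↔ 0 ≤ x ∧ ⌊x * 2 ^ N⌋₊ < 2 ^ N := by
  rw [Set.mem_Ico, and_congr_right_iff]
  intro hx
  rw [Nat.floor_lt (by positivity)]
  push_cast
  exact (mul_lt_iff_lt_one_left (by positivity)).symm

lemma floor_mul_two_pow_of_le {x : ℝ} {k N : ℕ} (hkN : k ≤ N) :
    ⌊x * 2 ^ k⌋₊ = ⌊x * 2 ^ N⌋₊ / 2 ^ (N - k) := by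
  have hpow : (2 : ℝ) ^ N = 2 ^ k * 2 ^ (N - k) := by rw [← pow_add, Nat.add_sub_cancel' hkN]
  rw [← Nat.floor_div_natCast, Nat.cast_pow, Nat.cast_ofNat, hpow, ← mul_assoc,
    mul_div_cancel_right₀ _ (by positivity)]

lemma haar_eq_ite_floor {x : ℝ} (hx : 0 ≤ x) (k m : ℕ) :
    haar k m x = if ⌊x * 2 ^ k⌋₊ = m then bitSign ⌊x * 2 ^ (k + 1)⌋₊ 0 else 0 := by
  unfold haar
  simp only [← Set.mem_Ico, mem_Ico_div_two_pow_iff, hx, true_and]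
  by_cases hm : ⌊x * 2 ^ k⌋₊ = m
  · rw [if_pos hm, if_pos hm]
    set r := ⌊x * 2 ^ (k + 1)⌋₊
    have hhalf : r / 2 = m := by
      rw [← hm, floor_mul_two_pow_of_le (Nat.le_add_right k 1), Nat.add_sub_cancel_left,
        pow_one]
    have hlt : x < (2 * (m : ℝ) + 1) / 2 ^ (k + 1) ↔ r < 2 * m + 1 := by
      rw [lt_div_iff₀ (by positivity), Nat.floor_lt (by positivity)]
      push_cast; rfl
    have hparity : r < 2 * m + 1 ↔ ¬r % 2 = 1 := by omega
    simp only [hlt, hparity, bitSign, Nat.testBit_zero, decide_eq_true_eq, ite_not]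
  · rw [if_neg hm, if_neg hm]

lemma haar_eq_ite_floor_div {x : ℝ} (hx : 0 ≤ x) {k N : ℕ} (hkN : k < N) (m : ℕ) :
    haar k m x =
      if ⌊x * 2 ^ N⌋₊ / 2 ^ (N - k) = m then bitSign ⌊x * 2 ^ N⌋₊ (N - 1 - k) else 0 := by
  rw [haar_eq_ite_floor hx, floor_mul_two_pow_of_le hkN.le, floor_mul_two_pow_of_le hkN,
    bitSign_div_two_pow, zero_add, Nat.sub_sub, Nat.add_comm 1 k]

noncomputable def sbTerm (n : ℕ) (α : ℕ → ℕ → ℕ → ℝ) (q₁ q₂ k : ℕ) : ℝ :=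
  α k (q₁ / 2 ^ (n + 1 - k)) (q₂ / 2 ^ (k + 1)) * bitSign q₁ (n - k) * bitSign q₂ k

lemma sbSum_eq_sum_sbTerm (n : ℕ) (α : ℕ → ℕ → ℕ → ℝ) {p : ℝ × ℝ} (h₁ : 0 ≤ p.1) (h₂ : 0 ≤ p.2)
    (hq₁ : ⌊p.1 * 2 ^ (n + 1)⌋₊ < 2 ^ (n + 1)) (hq₂ : ⌊p.2 * 2 ^ (n + 1)⌋₊ < 2 ^ (n + 1)) :
    sbSum n α p =
      ∑ k ∈ range (n + 1), sbTerm n α ⌊p.1 * 2 ^ (n + 1)⌋₊ ⌊p.2 * 2 ^ (n + 1)⌋₊ k := by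
  set q₁ := ⌊p.1 * 2 ^ (n + 1)⌋₊
  set q₂ := ⌊p.2 * 2 ^ (n + 1)⌋₊
  refine Finset.sum_congr rfl fun k hk => ?_
  have hkn : k < n + 1 := mem_range.1 hk
  have hx (m : ℕ) : haar k m p.1 = if q₁ / 2 ^ (n + 1 - k) = m then bitSign q₁ (n - k) else 0 := by
    rw [haar_eq_ite_floor_div h₁ hkn, Nat.add_sub_cancel]
  have hy (m : ℕ) : haar (n - k) m p.2 = if q₂ / 2 ^ (k + 1) = m then bitSign q₂ k else 0 := by
    rw [haar_eq_ite_floor_div h₂ (by omega : n - k < n + 1), show n + 1 - (n - k) = k + 1 by omega,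
      show n + 1 - 1 - (n - k) = k by omega]
  have hm₁ : q₁ / 2 ^ (n + 1 - k) < 2 ^ k := div_two_pow_sub_lt hq₁ hkn.le
  have hm₂ : q₂ / 2 ^ (k + 1) < 2 ^ (n - k) := by
    simpa [show n + 1 - (n - k) = k + 1 by omega] using
      div_two_pow_sub_lt hq₂ (by omega : n - k ≤ n + 1)
  simp only [haar2, hx, hy, ite_mul, mul_ite, zero_mul, mul_zero, Finset.sum_ite_eq, mem_range, hm₁,
    hm₂, if_true, sbTerm]
  ring

noncomputable def extremalSquares (n : ℕ) (α : ℕ → ℕ → ℕ → ℝ) : Finset (ℕ × ℕ) :=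
  (range (2 ^ (n + 1)) ×ˢ range (2 ^ (n + 1))).filter fun q => ∀ k < n + 1, sbTerm n α q.1 q.2 k = 1

section sbTerm

variable {n : ℕ} {ε : ℕ → ℕ → ℕ → ℝ}

lemma sbTerm_eq_one_or_eq_neg_one (hε : ∀ k m₁ m₂, ε k m₁ m₂ = 1 ∨ ε k m₁ m₂ = -1)
    (q₁ q₂ k : ℕ) : sbTerm n ε q₁ q₂ k = 1 ∨ sbTerm n ε q₁ q₂ k = -1 :=
  mul_eq_one_or_eq_neg_one (mul_eq_one_or_eq_neg_one (hε _ _ _) (bitSign_eq_one_or_eq_neg_one _ _))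
    (bitSign_eq_one_or_eq_neg_one _ _)

lemma sum_sbTerm_eq_iff_forall_eq_one (hε : ∀ k m₁ m₂, ε k m₁ m₂ = 1 ∨ ε k m₁ m₂ = -1) (q₁ q₂ : ℕ) :
    ∑ k ∈ range (n + 1), sbTerm n ε q₁ q₂ k = n + 1 ↔ ∀ k < n + 1, sbTerm n ε q₁ q₂ k = 1 := by
  have hle (k : ℕ) : sbTerm n ε q₁ q₂ k ≤ 1 := by
    rcases sbTerm_eq_one_or_eq_neg_one hε q₁ q₂ k with h | h <;> linarith
  simpa using Finset.sum_eq_sum_iff_of_le (s := range (n + 1)) (g := fun _ => (1 : ℝ))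
    fun k _ => hle k

lemma sbTerm_eq_one_iff_of_lt (hε : ∀ k m₁ m₂, ε k m₁ m₂ = 1 ∨ ε k m₁ m₂ = -1)
    {j a q₁ q₂ k : ℕ} (hj : j ≤ n + 1) (ha : q₁ / 2 ^ (n + 1 - j) = a) (hk : k < j) :
    sbTerm n ε q₁ q₂ k = 1 ↔
      q₂.testBit k =
        decide (ε k (a / 2 ^ (j - k)) (q₂ / 2 ^ (k + 1)) * bitSign a (j - 1 - k) = 1) := by
  rw [sbTerm, div_two_pow_eq_div_div (show n + 1 - j ≤ n + 1 - k by omega), ha,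
    bitSign_eq_of_div ha (show n + 1 - j ≤ n - k by omega),
    show n + 1 - k - (n + 1 - j) = j - k by omega, show n - k - (n + 1 - j) = j - 1 - k by omega]
  exact mul_bitSign_eq_one_iff
    (mul_eq_one_or_eq_neg_one (hε _ _ _) (bitSign_eq_one_or_eq_neg_one _ _)) _ _

lemma sbTerm_eq_one_iff_of_le (hε : ∀ k m₁ m₂, ε k m₁ m₂ = 1 ∨ ε k m₁ m₂ = -1)
    {j b q₁ q₂ k : ℕ} (hb : q₂ / 2 ^ j = b) (hjk : j ≤ k) :
    sbTerm n ε q₁ q₂ k = 1 ↔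
      q₁.testBit (n - k) =
        decide (ε k (q₁ / 2 ^ (n + 1 - k)) (b / 2 ^ (k + 1 - j)) * bitSign b (k - j) = 1) := by
  rw [sbTerm, div_two_pow_eq_div_div (show j ≤ k + 1 by omega), hb, bitSign_eq_of_div hb hjk,
    mul_right_comm]
  exact mul_bitSign_eq_one_iff
    (mul_eq_one_or_eq_neg_one (hε _ _ _) (bitSign_eq_one_or_eq_neg_one _ _)) _ _

lemma forall_sbTerm_eq_one_iff (hε : ∀ k m₁ m₂, ε k m₁ m₂ = 1 ∨ ε k m₁ m₂ = -1)
    {j a b q₁ q₂ : ℕ} (hj : j ≤ n + 1)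
    (ha : q₁ / 2 ^ (n + 1 - j) = a) (hb : q₂ / 2 ^ j = b) :
    (∀ k < n + 1, sbTerm n ε q₁ q₂ k = 1) ↔
      (∀ i < n + 1 - j, q₁.testBit i =
        decide (ε (n - i) (q₁ / 2 ^ (i + 1)) (b / 2 ^ (n - i + 1 - j)) * bitSign b (n - i - j) = 1))
      ∧
      (∀ k < j, q₂.testBit k =
        decide (ε k (a / 2 ^ (j - k)) (q₂ / 2 ^ (k + 1)) * bitSign a (j - 1 - k) = 1)) := by
  constructor
  · intro h
    refine ⟨fun i hi => ?_, fun k hk => (sbTerm_eq_one_iff_of_lt hε hj ha hk).1 (h k (by omega))⟩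
    have hi' := (sbTerm_eq_one_iff_of_le (q₁ := q₁) hε hb (show j ≤ n - i by omega)).1
      (h (n - i) (by omega))
    rwa [show n - (n - i) = i by omega, show n + 1 - (n - i) = i + 1 by omega] at hi'
  · rintro ⟨h₁, h₂⟩ k hk
    by_cases hkj : k < j
    · exact (sbTerm_eq_one_iff_of_lt hε hj ha hkj).2 (h₂ k hkj)
    · have hk' := h₁ (n - k) (by omega)
      rw [show n - (n - k) = k by omega, show n - k + 1 = n + 1 - k by omega] at hk'
      exact (sbTerm_eq_one_iff_of_le hε hb (not_lt.1 hkj)).2 hk'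

lemma card_filter_extremalSquares (hε : ∀ k m₁ m₂, ε k m₁ m₂ = 1 ∨ ε k m₁ m₂ = -1)
    {j : ℕ} (hj : j ≤ n + 1) {a b : ℕ} (ha : a < 2 ^ j) (hb : b < 2 ^ (n + 1 - j)) :
    ((extremalSquares n ε).filter fun q => q.1 / 2 ^ (n + 1 - j) = a ∧ q.2 / 2 ^ j = b).card
      = 1 := by
  obtain ⟨x₁, ⟨hx₁a, hx₁⟩, hx₁u⟩ := Nat.existsUnique_div_two_pow_eq_and_testBit (n + 1 - j) a
    fun i m => decide (ε (n - i) m (b / 2 ^ (n - i + 1 - j)) * bitSign b (n - i - j) = 1)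
  obtain ⟨x₂, ⟨hx₂b, hx₂⟩, hx₂u⟩ := Nat.existsUnique_div_two_pow_eq_and_testBit j b
    fun k m => decide (ε k (a / 2 ^ (j - k)) m * bitSign a (j - 1 - k) = 1)
  rw [Finset.card_eq_one]
  refine ⟨(x₁, x₂), Finset.eq_singleton_iff_unique_mem.2 ⟨?_, ?_⟩⟩
  · have hx₁lt : x₁ < 2 ^ (n + 1) := by
      simpa [Nat.add_sub_cancel' hj] using lt_two_pow_of_div_two_pow_eq hx₁a ha
    have hx₂lt : x₂ < 2 ^ (n + 1) := by
      simpa [Nat.sub_add_cancel hj] using lt_two_pow_of_div_two_pow_eq hx₂b hb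
    simp only [extremalSquares, mem_filter, mem_product, mem_range]
    exact ⟨⟨⟨hx₁lt, hx₂lt⟩, (forall_sbTerm_eq_one_iff hε hj hx₁a hx₂b).2 ⟨hx₁, hx₂⟩⟩, hx₁a, hx₂b⟩
  · rintro ⟨q₁, q₂⟩ hq
    simp only [extremalSquares, mem_filter] at hq
    obtain ⟨⟨-, hgood⟩, hq₁a, hq₂b⟩ := hq
    obtain ⟨h₁, h₂⟩ := (forall_sbTerm_eq_one_iff hε hj hq₁a hq₂b).1 hgood
    rw [hx₁u q₁ ⟨hq₁a, h₁⟩, hx₂u q₂ ⟨hq₂b, h₂⟩]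

lemma card_extremalSquares (hε : ∀ k m₁ m₂, ε k m₁ m₂ = 1 ∨ ε k m₁ m₂ = -1) :
    (extremalSquares n ε).card = 2 ^ (n + 1) := by
  have hmaps : Set.MapsTo Prod.fst (extremalSquares n ε : Set (ℕ × ℕ)) (range (2 ^ (n + 1))) :=
    fun q hq => (mem_product.1 (mem_filter.1 hq).1).1
  rw [Finset.card_eq_sum_card_fiberwise hmaps]
  have hfiber : ∀ a ∈ range (2 ^ (n + 1)),
      ((extremalSquares n ε).filter fun q => q.1 = a).card = 1 := by
    intro a ha
    rw [← card_filter_extremalSquares hε le_rfl (mem_range.1 ha) (b := 0) (by simp)]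
    congr 1
    refine Finset.filter_congr fun q hq => ?_
    have hq₂ : q.2 < 2 ^ (n + 1) := mem_range.1 (mem_product.1 (mem_filter.1 hq).1).2
    simp [Nat.div_eq_of_lt hq₂]
  simp [Finset.sum_congr rfl hfiber]

lemma setOf_sbSum_eq_iUnion_extremalSquares (hε : ∀ k m₁ m₂, ε k m₁ m₂ = 1 ∨ ε k m₁ m₂ = -1) :
    {p | p ∈ unitSq ∧ sbSum n ε p = n + 1} =
      ⋃ q ∈ extremalSquares n ε, dyadicRect (n + 1) q.1 (n + 1) q.2 := by
  ext p
  simp only [Set.mem_ofPred_eq, Set.mem_iUnion, exists_prop, unitSq, dyadicRect, Set.mem_prod,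
    mem_Ico_zero_one_iff (n + 1), mem_Ico_div_two_pow_iff, extremalSquares, mem_filter, mem_product,
    mem_range]
  constructor
  · rintro ⟨⟨⟨h₁, hq₁⟩, h₂, hq₂⟩, hsum⟩
    rw [sbSum_eq_sum_sbTerm n ε h₁ h₂ hq₁ hq₂, sum_sbTerm_eq_iff_forall_eq_one hε] at hsum
    exact ⟨(_, _), ⟨⟨hq₁, hq₂⟩, hsum⟩, ⟨h₁, rfl⟩, h₂, rfl⟩
  · rintro ⟨⟨q₁, q₂⟩, ⟨⟨hq₁, hq₂⟩, hgood⟩, ⟨h₁, rfl⟩, h₂, rfl⟩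
    rw [sbSum_eq_sum_sbTerm n ε h₁ h₂ hq₁ hq₂, sum_sbTerm_eq_iff_forall_eq_one hε]
    exact ⟨⟨⟨h₁, hq₁⟩, h₂, hq₂⟩, hgood⟩

end sbTerm

/-- The set where the signed hyperbolic sum attains the value `n+1` is a union of exactly
`2^{n+1}` dyadic squares of side `2^{-(n+1)}`, and every dyadic rectangle of area `2^{-(n+1)}`
contains exactly one of these squares (the square with lower-left corner
`(q₁ 2^{-(n+1)}, q₂ 2^{-(n+1)})` is contained in the rectangle of shape
`2^{-j} × 2^{-(n+1-j)}` indexed by `(a,b)` iff `q₁ / 2^{n+1-j} = a` and `q₂ / 2^j = b`). -/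
theorem signed_small_ball_extremal_set (n : ℕ) (ε : ℕ → ℕ → ℕ → ℝ)
    (hε : ∀ k m₁ m₂, ε k m₁ m₂ = 1 ∨ ε k m₁ m₂ = -1) :
    ∃ S : Finset (ℕ × ℕ),
      (∀ q ∈ S, q.1 < 2 ^ (n + 1) ∧ q.2 < 2 ^ (n + 1)) ∧
      S.card = 2 ^ (n + 1) ∧
      ({p | p ∈ unitSq ∧ sbSum n ε p = n + 1}
        = ⋃ q ∈ S, dyadicRect (n + 1) q.1 (n + 1) q.2) ∧
      (∀ j ≤ n + 1, ∀ a < 2 ^ j, ∀ b < 2 ^ (n + 1 - j),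
        (S.filter (fun q => q.1 / 2 ^ (n + 1 - j) = a ∧ q.2 / 2 ^ j = b)).card = 1) :=
  ⟨extremalSquares n ε,
    fun _ hq => mem_product.1 (mem_filter.1 hq).1 |>.imp mem_range.1 mem_range.1,
    card_extremalSquares hε, setOf_sbSum_eq_iUnion_extremalSquares hε,
    fun _ hj _ ha _ hb => card_filter_extremalSquares hε hj ha hb⟩
end
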